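/- Let H be a normal subgroup of a finite group G and g ∈ G. Then p_g^{(1,1)}(H,G) ≤ [G:H] · p_1(G), where p_1(G) = d(G) is the commutativity degree of G. -/

import Mathlib

open scoped BigOperators

/-- The commutator `[a,b] = a⁻¹b⁻¹ab`. -/
def gcomm {G : Type*} [Group G] (a b : G) : G := a⁻¹ * b⁻¹ * a * b

/-- Left-normed iterated commutator of a list of group elements. -/
def lcomm {G : Type*} [Group G] : List G → G
  | [] => 1
  | a :: t => t.foldl gcomm a

/-- `pgen H K n m g` is the probability that a randomly chosen left-normed commutator
of weight `n + m` on `Hⁿ × Kᵐ` equals `g`. -/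
noncomputable def pgen {G : Type*} [Group G] (H K : Subgroup G) (n m : ℕ) (g : G) : ℚ :=
  (Nat.card {z : (Fin n → H) × (Fin m → K) //
      lcomm (List.ofFn (fun i => ((z.1 i : G))) ++ List.ofFn (fun j => ((z.2 j : G)))) = g} : ℚ) /
    ((Nat.card H : ℚ) ^ n * (Nat.card K : ℚ) ^ m)

/-!
For fixed `x`, the solutions `y ∈ K` of `[x, y] = g` are either none or a single right coset
`C_K(x) y₀` of the centralizer, so there are at most as many of them as solutions of `[x, y] = 1`.
Hence `|{(x, y) ∈ H × G : [x, y] = g}| ≤ |{(x, y) ∈ G × G : [x, y] = 1}|`, and dividing by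
`|H| |G| = |G|² / [G : H]` gives the inequality.
-/

section Commutator

variable {G : Type*} [Group G]

lemma gcomm_eq_iff {a b g : G} : gcomm a b = g ↔ b⁻¹ * a * b = a * g := by
  rw [show gcomm a b = a⁻¹ * (b⁻¹ * a * b) by unfold gcomm; group, inv_mul_eq_iff_eq_mul,
    eq_comm]

lemma gcomm_mul_inv_eq_one {x y y₀ g : G} (hy : gcomm x y = g) (hy₀ : gcomm x y₀ = g) :
    gcomm x (y * y₀⁻¹) = 1 := by
  rw [gcomm_eq_iff] at hy hy₀ ⊢
  calc (y * y₀⁻¹)⁻¹ * x * (y * y₀⁻¹) = y₀ * (y⁻¹ * x * y) * y₀⁻¹ := by group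
    _ = x * 1 := by rw [hy, ← hy₀]; group

lemma card_gcomm_eq_le_card_gcomm_eq_one (H K : Subgroup G) [Finite H] [Finite K] (g : G) :
    Nat.card {p : H × K // gcomm (p.1 : G) p.2 = g} ≤
      Nat.card {p : H × K // gcomm (p.1 : G) p.2 = 1} := by
  have hbase : ∀ x : H, ∃ y₀ : K, ∀ y : K, gcomm (x : G) y = g →
      gcomm (x : G) ((y * y₀⁻¹ : K) : G) = 1 := by
    intro x
    by_cases hx : ∃ y₀ : K, gcomm (x : G) y₀ = g
    · obtain ⟨y₀, hy₀⟩ := hx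
      exact ⟨y₀, fun y hy => gcomm_mul_inv_eq_one hy hy₀⟩
    · exact ⟨1, fun y hy => (hx ⟨y, hy⟩).elim⟩
  choose y₀ hy₀ using hbase
  refine Nat.card_le_card_of_injective
    (fun p => ⟨(p.1.1, p.1.2 * (y₀ p.1.1)⁻¹), hy₀ p.1.1 p.1.2 p.2⟩) ?_
  rintro ⟨⟨x, y⟩, _⟩ ⟨⟨x', y'⟩, _⟩ h
  simp only [Subtype.mk.injEq, Prod.mk.injEq] at h
  obtain ⟨rfl, hy⟩ := h
  simpa using mul_right_cancel hy

lemma card_gcomm_eq_mono {H H' : Subgroup G} (hH : H ≤ H') (K : Subgroup G) [Finite H']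
    [Finite K] (g : G) :
    Nat.card {p : H × K // gcomm (p.1 : G) p.2 = g} ≤
      Nat.card {p : H' × K // gcomm (p.1 : G) p.2 = g} :=
  Nat.card_le_card_of_injective (fun p => ⟨(Subgroup.inclusion hH p.1.1, p.1.2), p.2⟩)
    fun _ _ h => Subtype.ext <| Prod.ext
      (Subgroup.inclusion_injective hH (congrArg (·.1.1) h)) (congrArg (·.1.2) h)

lemma pgen_one_one (H K : Subgroup G) (g : G) :
    pgen H K 1 1 g =
      Nat.card {p : H × K // gcomm (p.1 : G) p.2 = g} / (Nat.card H * Nat.card K) := by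
  rw [pgen, pow_one, pow_one]
  congr 2
  -- `lcomm [a, b]` reduces to `gcomm a b`
  exact Nat.card_congr (((Equiv.funUnique (Fin 1) H).prodCongr
    (Equiv.funUnique (Fin 1) K)).subtypeEquiv fun _ => Iff.rfl)

end Commutator

theorem stmt16_general (G : Type*) [Group G] [Fintype G] (H : Subgroup G) (g : G) :
    pgen H ⊤ 1 1 g ≤ (H.index : ℚ) * pgen (⊤ : Subgroup G) ⊤ 1 1 (1 : G) := by
  have hcard : Nat.card {p : H × (⊤ : Subgroup G) // gcomm (p.1 : G) p.2 = g} ≤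
      Nat.card {p : (⊤ : Subgroup G) × (⊤ : Subgroup G) // gcomm (p.1 : G) p.2 = 1} :=
    (card_gcomm_eq_le_card_gcomm_eq_one H ⊤ g).trans (card_gcomm_eq_mono le_top ⊤ 1)
  have hindex : (Nat.card H : ℚ) * H.index = Nat.card G := by
    exact_mod_cast H.card_mul_index
  have hH : (Nat.card H : ℚ) ≠ 0 := by exact_mod_cast Nat.card_pos.ne'
  have hi : (H.index : ℚ) ≠ 0 := by exact_mod_cast H.index_ne_zero_of_finite
  rw [pgen_one_one, pgen_one_one, Subgroup.card_top, ← hindex]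
  refine (div_le_div_of_nonneg_right (Nat.cast_le.mpr hcard) (by positivity)).trans_eq ?_
  field_simp

theorem stmt16 (G : Type*) [Group G] [Fintype G] (H : Subgroup G) [H.Normal] (g : G) :
    pgen H ⊤ 1 1 g ≤ (H.index : ℚ) * pgen (⊤ : Subgroup G) ⊤ 1 1 (1 : G) :=
  stmt16_general G H g
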